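/- arXiv:2207.02642 — 10 statements merged into one kernel-verified Lean document; each statement's English description precedes it below -/
import Mathlib

section
/- In a sectionally pseudocomplemented poset, if z ≤ x, z ≤ y and x ≤ y*z, then y ≤ x*z. -/
variable {α : Type*}

/-- `c` is the pseudocomplement of `x` in the upper section `[y)`:
`[y,c] ∩ [y,x] = {y}` and every `u` with `[y,u] ∩ [y,x] = {y}` satisfies `u ≤ c`. -/
def IsPC [PartialOrder α] (x y c : α) : Prop :=
  Set.Icc y c ∩ Set.Icc y x = {y} ∧ ∀ u, Set.Icc y u ∩ Set.Icc y x = {y} → u ≤ c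

/-- `z` is a maximal lower bound of `x` and `y`. -/
def MaxLB [PartialOrder α] (z x y : α) : Prop :=
  z ≤ x ∧ z ≤ y ∧ ∀ v, v ≤ x → v ≤ y → z ≤ v → v = z

/-- `c = max {u ≥ y : [y,u] ∩ [y,x] ⊆ {y}}`, the natural esp-complement of `x` in `[y)`. -/
def IsNatPC [PartialOrder α] (x y c : α) : Prop :=
  y ≤ c ∧ (Set.Icc y c ∩ Set.Icc y x ⊆ {y}) ∧
    ∀ u, y ≤ u → Set.Icc y u ∩ Set.Icc y x ⊆ {y} → u ≤ c

theorem stmt2 [PartialOrder α] (star : α → α → α)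
    (hstar : ∀ x y : α, y ≤ x → IsPC x y (star x y))
    (x y z : α) (hzx : z ≤ x) (hzy : z ≤ y) (h : x ≤ star y z) :
    y ≤ star x z := by
  obtain ⟨hy1, hy2⟩ := hstar y z hzy
  obtain ⟨hx1, hx2⟩ := hstar x z hzx
  apply hx2
  apply Set.eq_singleton_iff_unique_mem.2
  constructor
  · exact ⟨⟨le_refl z, hzy⟩, ⟨le_refl z, hzx⟩⟩
  · rintro w ⟨⟨hzw, hwy⟩, ⟨-, hwx⟩⟩
    have : w ∈ Set.Icc z (star y z) ∩ Set.Icc z y :=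
      ⟨⟨hzw, hwx.trans h⟩, ⟨hzw, hwy⟩⟩
    rw [hy1] at this
    exact this
end

section
/- In a sectionally pseudocomplemented poset, if y ≤ x then x*x = y*y; in particular, different maximal elements have no common lower bound. -/
variable {α : Type*}

lemma icc_inter_self_eq {α : Type*} [PartialOrder α] {x u : α} (h : x ≤ u) :
    Set.Icc x u ∩ Set.Icc x x = {x} := by
  ext z
  simp only [Set.mem_inter_iff, Set.mem_Icc, Set.mem_singleton_iff]
  constructor
  · rintro ⟨_, h1, h2⟩; exact le_antisymm h2 h1
  · rintro rfl; exact ⟨⟨le_refl _, h⟩, le_refl _, le_refl _⟩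

lemma star_self_le {α : Type*} [PartialOrder α] (star : α → α → α)
    (hstar : ∀ x y : α, y ≤ x → IsPC x y (star x y)) (x : α) : x ≤ star x x := by
  obtain ⟨h1, _⟩ := hstar x x le_rfl
  have : x ∈ Set.Icc x (star x x) ∩ Set.Icc x x := h1 ▸ rfl
  exact this.1.2

lemma star_self_max {α : Type*} [PartialOrder α] (star : α → α → α)
    (hstar : ∀ x y : α, y ≤ x → IsPC x y (star x y)) {x u : α} (h : x ≤ u) :
    u ≤ star x x :=
  (hstar x x le_rfl).2 u (icc_inter_self_eq h)

theorem stmt6 [PartialOrder α] (star : α → α → α)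
    (hstar : ∀ x y : α, y ≤ x → IsPC x y (star x y)) :
    (∀ x y : α, y ≤ x → star x x = star y y) ∧
    (∀ a b c : α, (∀ w, a ≤ w → w = a) → (∀ w, b ≤ w → w = b) →
      c ≤ a → c ≤ b → a = b) := by
  have key : ∀ x y : α, y ≤ x → star x x = star y y := by
    intro x y hyx
    have h1 : star x x ≤ star y y :=
      star_self_max star hstar (hyx.trans (star_self_le star hstar x))
    have h2 : star y y ≤ star x x :=
      star_self_max star hstar ((star_self_le star hstar x).trans h1)
    exact le_antisymm h1 h2
  refine ⟨key, fun a b c hma hmb hca hcb => ?_⟩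
  have ha : star a a = a := hma _ (star_self_le star hstar a)
  have hb : star b b = b := hmb _ (star_self_le star hstar b)
  calc a = star a a := ha.symm
    _ = star c c := key a c hca
    _ = star b b := (key b c hcb).symm
    _ = b := hb
end

section
/- A partial binary operation * on a poset P, defined exactly for pairs (x,y) with y ≤ x, is a sectional pseudocomplementation (i.e., x*y is the pseudocomplement of x in [y) for all y ≤ x) if and only if it satisfies: (sp1) if z ≤ x ≤ y then y*z ≤ x*z; (sp2) if y ≤ x and x ≤ x*y then x ≤ y; (sp3) if z is a maximal lower bound of x and y then x ≤ y*z. -/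
variable {α : Type*}

theorem stmt10 [PartialOrder α] (star : α → α → α) :
    (∀ x y : α, y ≤ x → IsPC x y (star x y)) ↔
      ((∀ x y z : α, z ≤ x → x ≤ y → star y z ≤ star x z) ∧
       (∀ x y : α, y ≤ x → x ≤ star x y → x ≤ y) ∧
       (∀ x y z : α, MaxLB z x y → x ≤ star y z)) := by
  constructor
  · intro H
    have hle : ∀ x y : α, y ≤ x → y ≤ star x y := by
      intro x y hyx
      have h := (H x y hyx).1
      have : y ∈ Set.Icc y (star x y) ∩ Set.Icc y x := by
        rw [h]; exact rfl
      exact this.1.2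
    refine ⟨?_, ?_, ?_⟩
    · intro x y z hzx hxy
      refine (H x z (hzx)).2 (star y z) ?_
      apply Set.Subset.antisymm
      · intro t ⟨⟨h1, h2⟩, ⟨_, h4⟩⟩
        have : t ∈ Set.Icc z (star y z) ∩ Set.Icc z y :=
          ⟨⟨h1, h2⟩, ⟨h1, le_trans h4 hxy⟩⟩
        rw [(H y z (le_trans hzx hxy)).1] at this
        exact this
      · intro t ht
        rcases ht with rfl
        exact ⟨⟨le_refl _, hle _ _ (le_trans hzx hxy)⟩, ⟨le_refl _, hzx⟩⟩
    · intro x y hyx hxs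
      have : x ∈ Set.Icc y (star x y) ∩ Set.Icc y x :=
        ⟨⟨hyx, hxs⟩, ⟨hyx, le_refl _⟩⟩
      rw [(H x y hyx).1] at this
      exact le_of_eq this
    · rintro x y z ⟨hzx, hzy, hmax⟩
      refine (H y z hzy).2 x ?_
      apply Set.Subset.antisymm
      · intro t ⟨⟨h1, h2⟩, ⟨_, h4⟩⟩
        exact hmax t h2 h4 h1
      · intro t ht
        rcases ht with rfl
        exact ⟨⟨le_refl _, hzx⟩, ⟨le_refl _, hzy⟩⟩
  · rintro ⟨sp1, sp2, sp3⟩ x y hyx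
    have hys : y ≤ star x y := by
      refine sp3 y x y ⟨le_refl _, hyx, ?_⟩
      intro v h1 _ h3
      exact le_antisymm h1 h3
    constructor
    · apply Set.Subset.antisymm
      · intro t ⟨⟨h1, h2⟩, ⟨_, h4⟩⟩
        have hst : star x y ≤ star t y := sp1 t x y h1 h4
        have : t ≤ y := sp2 t y h1 (le_trans h2 hst)
        exact le_antisymm this h1
      · intro t ht
        rcases ht with rfl
        exact ⟨⟨le_refl _, hys⟩, ⟨le_refl _, hyx⟩⟩
    · intro u hu
      have hyu : y ≤ u := by
        have : y ∈ Set.Icc y u ∩ Set.Icc y x := by rw [hu]; exact rfl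
        exact this.1.2
      refine sp3 u x y ⟨hyu, hyx, ?_⟩
      intro v h1 h2 h3
      have : v ∈ Set.Icc y u ∩ Set.Icc y x := ⟨⟨h3, h1⟩, ⟨h3, h2⟩⟩
      rw [hu] at this
      exact this
end

section
/- A total binary operation → on a poset P restricts to a sectional pseudocomplementation on pairs (x,y) with y ≤ x (i.e., is an extended sp-complementation) if and only if it satisfies: (esp1) if z ≤ x ≤ y then y→z ≤ x→z; (esp2) if y ≤ x ≤ x→y then x ≤ y; (esp3) if z is a maximal lower bound of x and y then x ≤ y→z. -/
variable {α : Type*}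

theorem stmt11 [PartialOrder α] (arrow : α → α → α) :
    (∀ x y : α, y ≤ x → IsPC x y (arrow x y)) ↔
      ((∀ x y z : α, z ≤ x → x ≤ y → arrow y z ≤ arrow x z) ∧
       (∀ x y : α, y ≤ x → x ≤ arrow x y → x ≤ y) ∧
       (∀ x y z : α, MaxLB z x y → x ≤ arrow y z)) := by
  constructor
  · intro H
    refine ⟨?_, ?_, ?_⟩
    · intro x y z hzx hxy
      obtain ⟨hx, hxmax⟩ := H x z hzx
      obtain ⟨hy, hymax⟩ := H y z (hzx.trans hxy)
      have hzc : z ≤ arrow y z := by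
        have : z ∈ ({z} : Set α) := rfl
        rw [← hy] at this
        exact this.1.2
      apply hxmax
      apply Set.eq_singleton_iff_unique_mem.2
      constructor
      · exact ⟨⟨le_refl z, hzc⟩, le_refl z, hzx⟩
      · rintro w ⟨⟨h1, h2⟩, h3, h4⟩
        have : w ∈ Set.Icc z (arrow y z) ∩ Set.Icc z y := ⟨⟨h1, h2⟩, h3, h4.trans hxy⟩
        rw [hy] at this; exact this
    · intro x y hyx hxc
      obtain ⟨hx, _⟩ := H x y hyx
      have : x ∈ Set.Icc y (arrow x y) ∩ Set.Icc y x := ⟨⟨hyx, hxc⟩, hyx, le_refl x⟩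
      rw [hx] at this; exact le_of_eq this
    · rintro x y z ⟨hzx, hzy, hmax⟩
      obtain ⟨hy, hymax⟩ := H y z hzy
      apply hymax
      apply Set.eq_singleton_iff_unique_mem.2
      refine ⟨⟨⟨le_refl z, hzx⟩, le_refl z, hzy⟩, ?_⟩
      rintro w ⟨⟨h1, h2⟩, _, h4⟩
      exact hmax w h2 h4 h1
  · rintro ⟨e1, e2, e3⟩ x y hyx
    have hyc : y ≤ arrow x y :=
      e3 y x y ⟨le_refl y, hyx, fun v h1 _ h3 => le_antisymm h1 h3⟩
    constructor
    · apply Set.eq_singleton_iff_unique_mem.2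
      refine ⟨⟨⟨le_refl y, hyc⟩, le_refl y, hyx⟩, ?_⟩
      rintro w ⟨⟨h1, h2⟩, _, h4⟩
      have h5 : arrow x y ≤ arrow w y := e1 w x y h1 h4
      exact le_antisymm (e2 w y h1 (h2.trans h5)) h1
    · intro u hu
      have hyu : y ≤ u := by
        have : y ∈ Set.Icc y u ∩ Set.Icc y x := by rw [hu]; rfl
        exact this.1.2
      apply e3 u x y
      refine ⟨hyu, hyx, fun v h1 h2 h3 => ?_⟩
      have hv : v ∈ Set.Icc y u ∩ Set.Icc y x := ⟨⟨h3, h1⟩, h3, h2⟩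
      rw [hu] at hv; exact hv
end

section
/- A meet semilattice (P, ∧) with a total binary operation → is a meet semilattice with extended sp-complementation if and only if it satisfies the identities: (esp∧1) x ∧ (x → (x ∧ y)) = x ∧ y, and (esp∧2) x ≤ y → (x ∧ y). Hence this class of algebras is a variety. -/
variable {α : Type*}

theorem stmt13 [SemilatticeInf α] (arrow : α → α → α) :
    (∀ x y : α, y ≤ x → IsPC x y (arrow x y)) ↔
      ((∀ x y : α, x ⊓ arrow x (x ⊓ y) = x ⊓ y) ∧
       (∀ x y : α, x ≤ arrow y (x ⊓ y))) := by
  constructor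
  · intro h
    constructor
    · intro x y
      obtain ⟨heq, _⟩ := h x (x ⊓ y) inf_le_left
      have hy : x ⊓ y ≤ arrow x (x ⊓ y) := by
        have : (x ⊓ y) ∈ ({x ⊓ y} : Set α) := rfl
        rw [← heq] at this
        exact this.1.2
      have hmem : x ⊓ arrow x (x ⊓ y) ∈ Set.Icc (x ⊓ y) (arrow x (x ⊓ y)) ∩ Set.Icc (x ⊓ y) x :=
        ⟨⟨le_inf inf_le_left hy, inf_le_right⟩, ⟨le_inf inf_le_left hy, inf_le_left⟩⟩
      rw [heq] at hmem
      exact hmem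
    · intro x y
      obtain ⟨_, hmax⟩ := h y (x ⊓ y) inf_le_right
      apply hmax
      apply Set.eq_singleton_iff_unique_mem.2
      refine ⟨⟨⟨le_rfl, inf_le_left⟩, ⟨le_rfl, inf_le_right⟩⟩, ?_⟩
      rintro u ⟨⟨h1, h2⟩, ⟨_, h3⟩⟩
      exact le_antisymm (le_inf h2 h3) h1
  · rintro ⟨h1, h2⟩ x y hyx
    have hxy : x ⊓ y = y := inf_eq_right.2 hyx
    have hc : x ⊓ arrow x y = y := by
      have := h1 x y; rwa [hxy] at this
    have hyc : y ≤ arrow x y := le_trans (le_of_eq hc.symm) inf_le_right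
    constructor
    · apply Set.eq_singleton_iff_unique_mem.2
      refine ⟨⟨⟨le_rfl, hyc⟩, ⟨le_rfl, hyx⟩⟩, ?_⟩
      rintro u ⟨⟨hu1, hu2⟩, ⟨_, hu3⟩⟩
      refine le_antisymm ?_ hu1
      rw [← hc]; exact le_inf hu3 hu2
    · intro u hu
      have hyu : y ≤ u := by
        have : y ∈ ({y} : Set α) := rfl
        rw [← hu] at this
        exact this.1.2
      have hux : u ⊓ x = y := by
        have hmem : u ⊓ x ∈ Set.Icc y u ∩ Set.Icc y x :=
          ⟨⟨le_inf hyu hyx, inf_le_left⟩, ⟨le_inf hyu hyx, inf_le_right⟩⟩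
        rw [hu] at hmem
        exact hmem
      have := h2 u x
      rwa [hux] at this
end

section
/- An operation → on a poset P satisfies x→y = max{u ≥ y : [y,u] ∩ [y,x] ⊆ {y}} for all x, y (i.e., is a natural esp-complementation) if and only if → is an extended sp-complementation and x→y = 1_y whenever y ≰ x, where 1_y denotes the greatest element of [y). -/
variable {α : Type*}

theorem stmt14 [PartialOrder α] (arrow : α → α → α) :
    (∀ x y : α, IsNatPC x y (arrow x y)) ↔
      ((∀ x y : α, y ≤ x → IsPC x y (arrow x y)) ∧
       (∀ x y : α, ¬ y ≤ x → IsGreatest (Set.Ici y) (arrow x y))) := by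
  constructor
  · intro h
    constructor
    · intro x y hyx
      obtain ⟨hc, hsub, hmax⟩ := h x y
      constructor
      · apply Set.Subset.antisymm hsub
        intro z hz
        rw [Set.mem_singleton_iff] at hz; subst hz
        exact ⟨⟨le_refl _, hc⟩, le_refl _, hyx⟩
      · intro u hu
        have hyu : y ≤ u := by
          have : y ∈ Set.Icc y u ∩ Set.Icc y x := by rw [hu]; rfl
          exact this.1.2
        exact hmax u hyu (hu ▸ Set.Subset.refl _)
    · intro x y hyx
      obtain ⟨hc, hsub, hmax⟩ := h x y
      refine ⟨hc, fun u hu => hmax u hu ?_⟩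
      intro z ⟨⟨hyz, _⟩, _, hzx⟩
      exact absurd (hyz.trans hzx) hyx
  · rintro ⟨h1, h2⟩ x y
    by_cases hyx : y ≤ x
    · obtain ⟨heq, hmax⟩ := h1 x y hyx
      have hyc : y ≤ arrow x y := by
        have : y ∈ Set.Icc y (arrow x y) ∩ Set.Icc y x := by rw [heq]; rfl
        exact this.1.2
      refine ⟨hyc, heq ▸ Set.Subset.refl _, fun u hyu hsub => ?_⟩
      apply hmax
      apply Set.Subset.antisymm hsub
      intro z hz
      rw [Set.mem_singleton_iff] at hz; subst hz
      exact ⟨⟨le_refl _, hyu⟩, le_refl _, hyx⟩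
    · obtain ⟨hc, hmax⟩ := h2 x y hyx
      refine ⟨hc, ?_, fun u hyu _ => hmax hyu⟩
      intro z ⟨⟨hyz, _⟩, _, hzx⟩
      exact absurd (hyz.trans hzx) hyx
end

section
/- A total binary operation → on a poset satisfies x→y = max{u ≥ y : [y,u] ∩ [y,x] ⊆ {y}} for all x, y if and only if it satisfies: (nat1) if x ≤ y then y→z ≤ x→z; (nat2) if y ≤ x ≤ x→y then x ≤ y; (nat3) if z ≤ x and [z,x] ∩ [z,y] ⊆ {z}, then x ≤ y→z. -/
variable {α : Type*}

theorem stmt15 [PartialOrder α] (arrow : α → α → α) :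
    (∀ x y : α, IsNatPC x y (arrow x y)) ↔
      ((∀ x y z : α, x ≤ y → arrow y z ≤ arrow x z) ∧
       (∀ x y : α, y ≤ x → x ≤ arrow x y → x ≤ y) ∧
       (∀ x y z : α, z ≤ x → Set.Icc z x ∩ Set.Icc z y ⊆ {z} → x ≤ arrow y z)) := by
  constructor
  · intro h
    refine ⟨?_, ?_, ?_⟩
    · intro x y z hxy
      obtain ⟨hz, hdisj, _⟩ := h y z
      obtain ⟨_, _, hmax⟩ := h x z
      exact hmax _ hz (fun w ⟨⟨h1, h2⟩, ⟨h3, h4⟩⟩ => hdisj ⟨⟨h1, h2⟩, ⟨h3, h4.trans hxy⟩⟩)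
    · intro x y hyx hxa
      obtain ⟨hy, hdisj, _⟩ := h x y
      exact (hdisj ⟨⟨hyx, hxa⟩, ⟨hyx, le_refl x⟩⟩ : x = y).le
    · intro x y z hzx hdisj
      obtain ⟨_, _, hmax⟩ := h y z
      exact hmax _ hzx hdisj
  · rintro ⟨nat1, nat2, nat3⟩ x y
    have hy : y ≤ arrow x y := by
      apply nat3 _ _ _ le_rfl
      intro w ⟨⟨h1, h2⟩, _⟩
      exact le_antisymm h2 h1
    refine ⟨hy, ?_, fun u hu hd => nat3 _ _ _ hu hd⟩
    intro w ⟨⟨hyw, hwa⟩, ⟨_, hwx⟩⟩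
    have : w ≤ arrow w y := hwa.trans (nat1 _ _ _ hwx)
    exact le_antisymm (nat2 _ _ hyw this) hyw
end

section
/- A natural ESP-poset (P, →) is left implicative (i.e., x ≤ y iff x→y = 1_x) if and only if every lower section (p] of P is a chain; and it is right implicative (x ≤ y iff x→y = 1_y) if and only if P is a chain. -/
variable {α : Type*}

theorem stmt16 [PartialOrder α] (arrow : α → α → α) (one : α → α)
    (hnat : ∀ x y : α, IsNatPC x y (arrow x y))
    (hone : ∀ p : α, IsGreatest (Set.Ici p) (one p)) :
    ((∀ x y : α, x ≤ y ↔ arrow x y = one x) ↔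
        ∀ p : α, IsChain (· ≤ ·) (Set.Iic p)) ∧
    ((∀ x y : α, x ≤ y ↔ arrow x y = one y) ↔
        ∀ a b : α, a ≤ b ∨ b ≤ a) := by
  -- if y ≤ one x then one y = one x
  have hones : ∀ x y : α, y ≤ one x → one y = one x := by
    intro x y h
    have h1 : one x ≤ one y := (hone y).2 h
    have h2 : one y ≤ one x := (hone x).2 (le_trans (hone x).1 h1)
    exact le_antisymm h2 h1
  -- if Icc y x ⊆ {y} then arrow x y = one y
  have hA : ∀ x y : α, Set.Icc y x ⊆ {y} → arrow x y = one y := by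
    intro x y h
    refine le_antisymm ((hone y).2 (hnat x y).1) ?_
    exact (hnat x y).2.2 (one y) (hone y).1 (fun z hz => h hz.2)
  -- if arrow x y = one y then Icc y x ⊆ {y}
  have hB : ∀ x y : α, arrow x y = one y → Set.Icc y x ⊆ {y} := by
    intro x y h z hz
    have : z ∈ Set.Icc y (arrow x y) ∩ Set.Icc y x := by
      refine ⟨⟨hz.1, ?_⟩, hz⟩
      rw [h]; exact (hone y).2 hz.1
    exact (hnat x y).2.1 this
  -- x ≤ y → Icc y x ⊆ {y}
  have hC : ∀ x y : α, x ≤ y → Set.Icc y x ⊆ {y} := by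
    intro x y h z hz
    exact le_antisymm (le_trans hz.2 h) hz.1
  constructor
  · constructor
    · intro li p a ha b hb hab
      have key : ∀ u v : α, u ∈ Set.Iic p → v ∈ Set.Iic p → ¬ u ≤ v → v ≤ u := by
        intro u v hu hv huv
        have hne : arrow u v ≠ one u := fun h => huv ((li u v).mpr h)
        have honeu : one u = one p := hones p u (le_trans hu (hone p).1)
        have honev : one v = one p := hones p v (le_trans hv (hone p).1)
        by_contra hvu
        have : Set.Icc v u ⊆ {v} := by
          intro z hz
          by_contra hz'
          exact hvu (le_trans hz.1 hz.2)
        exact hne (by rw [hA u v this, honev, honeu])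
      by_cases h : a ≤ b
      · exact Or.inl h
      · exact Or.inr (key a b ha hb h)
    · intro hch x y
      constructor
      · intro h
        have h1 : arrow x y = one y := hA x y (hC x y h)
        rw [h1, hones y x (le_trans h (hone y).1)]
      · intro h
        have hy : y ≤ one x := h ▸ (hnat x y).1
        have hx : x ≤ one x := (hone x).1
        by_cases hxy : x = y
        · exact le_of_eq hxy
        · rcases hch (one x) hx hy hxy with h' | h'
          · exact h'
          · have : x ∈ Set.Icc y (arrow x y) ∩ Set.Icc y x :=
              ⟨⟨h', h ▸ hx⟩, ⟨h', le_refl x⟩⟩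
            exact le_of_eq ((hnat x y).2.1 this)
  · constructor
    · intro ri a b
      by_cases h : a ≤ b
      · exact Or.inl h
      · right
        have hne : arrow a b ≠ one b := fun hh => h ((ri a b).mpr hh)
        by_contra hba
        have : Set.Icc b a ⊆ {b} := by
          intro z hz
          by_contra hz'
          exact hba (le_trans hz.1 hz.2)
        exact hne (hA a b this)
    · intro hch x y
      constructor
      · intro h; exact hA x y (hC x y h)
      · intro h
        rcases hch x y with h' | h'
        · exact h'
        · have : x ∈ Set.Icc y x := ⟨h', le_refl x⟩
          exact le_of_eq (hB x y h this)
end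

section
/- A total operation → on a sectionally pseudocomplemented poset (P,*) is the natural extension of * (i.e., x→y = max{u ≥ y : [y,u] ∩ [y,x] ⊆ {y}}) if and only if for all x, y: x→y = min{z*y : z ∈ [y,x] ∪ {y}}. -/
variable {α : Type*}

theorem stmt17 [PartialOrder α] (star arrow : α → α → α)
    (hstar : ∀ x y : α, y ≤ x → IsPC x y (star x y)) :
    (∀ x y : α, IsNatPC x y (arrow x y)) ↔
      (∀ x y : α, IsLeast ((fun z => star z y) '' (Set.Icc y x ∪ {y})) (arrow x y)) := by
  constructor
  · intro h x y
    obtain ⟨hyc, hsub, hmax⟩ := h x y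
    have hlb : ∀ z ∈ Set.Icc y x ∪ {y}, arrow x y ≤ star z y := by
      intro z hz
      have hyz : y ≤ z := by
        rcases hz with hz | hz
        · exact hz.1
        · exact le_of_eq hz.symm
      obtain ⟨_, hm⟩ := hstar z y hyz
      apply hm
      apply Set.Subset.antisymm
      · intro w hw
        rcases hz with hz | hz
        · exact hsub ⟨hw.1, hw.2.1, hw.2.2.trans hz.2⟩
        · rw [Set.mem_singleton_iff] at hz
          subst hz
          exact le_antisymm hw.2.2 hw.2.1
      · intro w hw
        rw [Set.mem_singleton_iff] at hw
        subst hw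
        exact ⟨⟨le_refl _, hyc⟩, le_refl _, hyz⟩
    constructor
    · by_cases hyx : y ≤ x
      · refine ⟨x, Or.inl ⟨hyx, le_refl x⟩, ?_⟩
        have h1 : arrow x y ≤ star x y := hlb x (Or.inl ⟨hyx, le_refl x⟩)
        have h2 : star x y ≤ arrow x y := by
          obtain ⟨heq, _⟩ := hstar x y hyx
          have hysxy : y ≤ star x y := by
            have hy : y ∈ Set.Icc y (star x y) ∩ Set.Icc y x := by
              rw [heq]; rfl
            exact hy.1.2
          exact hmax _ hysxy heq.le
        exact le_antisymm h2 h1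
      · refine ⟨y, Or.inr rfl, ?_⟩
        have h1 : arrow x y ≤ star y y := hlb y (Or.inr rfl)
        have h2 : star y y ≤ arrow x y := by
          obtain ⟨heq, _⟩ := hstar y y (le_refl y)
          have hysy : y ≤ star y y := by
            have hy : y ∈ Set.Icc y (star y y) ∩ Set.Icc y y := by
              rw [heq]; rfl
            exact hy.1.2
          refine hmax _ hysy ?_
          intro w hw
          exact absurd (hw.2.1.trans hw.2.2) hyx
        exact le_antisymm h2 h1
    · intro b hb
      obtain ⟨z, hz, rfl⟩ := hb
      exact hlb z hz
  · intro h x y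
    obtain ⟨hmem, hlb⟩ := h x y
    obtain ⟨z, hz, hzc⟩ := hmem
    have hyz : y ≤ z := by
      rcases hz with hz | hz
      · exact hz.1
      · exact le_of_eq hz.symm
    obtain ⟨heq, hm⟩ := hstar z y hyz
    have hyc : y ≤ arrow x y := by
      rw [← hzc]
      have hy : y ∈ Set.Icc y (star z y) ∩ Set.Icc y z := by rw [heq]; rfl
      exact hy.1.2
    refine ⟨hyc, ?_, ?_⟩
    · intro w hw
      have hwc : w ≤ arrow x y := hw.1.2
      have hws : arrow x y ≤ star w y := hlb ⟨w, Or.inl hw.2, rfl⟩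
      obtain ⟨heqw, _⟩ := hstar w y hw.2.1
      have hmem2 : w ∈ Set.Icc y (star w y) ∩ Set.Icc y w :=
        ⟨⟨hw.2.1, hwc.trans hws⟩, hw.2.1, le_refl w⟩
      rw [heqw] at hmem2
      exact hmem2
    · intro u hyu hu
      rw [← hzc]
      apply hm
      apply Set.Subset.antisymm
      · intro w hw
        rcases hz with hz | hz
        · exact hu ⟨hw.1, hw.2.1, hw.2.2.trans hz.2⟩
        · rw [Set.mem_singleton_iff] at hz; subst hz
          exact le_antisymm hw.2.2 hw.2.1
      · intro w hw
        rw [Set.mem_singleton_iff] at hw; subst hw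
        exact ⟨⟨le_refl _, hyu⟩, le_refl _, hyz⟩
end

section
/- A finite sectionally pseudocomplemented poset admits a normal extension (a total operation → with x→y = max{z*y : z ≥ x and z ≥ y} for all x,y) if and only if it is an upper semilattice. -/
variable {α : Type*}

lemma my_exists_min [PartialOrder α] [Finite α] (U : Set α) (z : α) (hz : z ∈ U) :
    ∃ m, m ∈ U ∧ m ≤ z ∧ ∀ v ∈ U, v ≤ m → v = m := by
  obtain ⟨m, ⟨hmU, hmz⟩, hmin⟩ :=
    (IsWellFounded.wf (r := ((· < ·) : α → α → Prop))).has_min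
      {v | v ∈ U ∧ v ≤ z} ⟨z, hz, le_rfl⟩
  refine ⟨m, hmU, hmz, fun v hv hvm => ?_⟩
  by_contra hne
  exact hmin v ⟨hv, hvm.trans hmz⟩ (lt_of_le_of_ne hvm hne)

lemma my_lub_iff [PartialOrder α] (a b s : α) :
    IsLUB ({a, b} : Set α) s ↔ (a ≤ s ∧ b ≤ s) ∧ ∀ v, a ≤ v → b ≤ v → s ≤ v := by
  constructor
  · intro h
    refine ⟨⟨h.1 (by simp), h.1 (by simp)⟩, fun v hav hbv => h.2 ?_⟩
    rintro t (rfl | rfl) <;> assumption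
  · intro ⟨⟨has, hbs⟩, hmin⟩
    constructor
    · rintro t (rfl | rfl) <;> assumption
    · intro v hv
      exact hmin v (hv (by simp)) (hv (by simp))

theorem stmt18 [PartialOrder α] [Fintype α] (star : α → α → α)
    (hstar : ∀ x y : α, y ≤ x → IsPC x y (star x y)) :
    (∃ arrow : α → α → α, ∀ x y : α,
        IsGreatest ((fun z => star z y) '' {z | x ≤ z ∧ y ≤ z}) (arrow x y)) ↔
      (∀ a b : α, ∃ c : α, IsLUB {a, b} c) := by
  constructor
  · rintro ⟨arrow, harr⟩
    by_contra hnot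
    push_neg at hnot
    obtain ⟨a0, b0, hbad0⟩ := hnot
    obtain ⟨b, hbM, hbmax⟩ :=
      (IsWellFounded.wf (r := ((· > ·) : α → α → Prop))).has_min
        {y | ∃ x, ∀ c, ¬ IsLUB ({x, y} : Set α) c} ⟨b0, a0, hbad0⟩
    obtain ⟨a, hab⟩ := hbM
    set U : Set α := {z | a ≤ z ∧ b ≤ z} with hUdef
    obtain ⟨hc_mem, hc_ub⟩ := harr a b
    obtain ⟨z0, hz0, hz0c⟩ := hc_mem
    set c := arrow a b with hcdef
    -- b is not a least element of U (else it would be the LUB)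
    have hnoleast : ∀ s ∈ U, (∀ v ∈ U, s ≤ v) → False := by
      intro s hs hleast
      exact hab s ((my_lub_iff a b s).2 ⟨hs, fun v hav hbv => hleast v ⟨hav, hbv⟩⟩)
    obtain ⟨m1, hm1U, hm1z0, hm1min⟩ := my_exists_min U z0 hz0
    have hz2 : ∃ z2 ∈ U, ¬ m1 ≤ z2 := by
      by_contra h
      push_neg at h
      exact hnoleast m1 hm1U h
    obtain ⟨z2, hz2U, hm1z2⟩ := hz2
    obtain ⟨m2, hm2U, hm2z2, hm2min⟩ := my_exists_min U z2 hz2U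
    have hne : m1 ≠ m2 := fun h => hm1z2 (h ▸ hm2z2)
    by_cases hw : ∃ w, b < w ∧ w ≤ m1 ∧ w ≤ m2
    · -- common lower bound of m1, m2 strictly above b : pair (a, w) has a LUB
      obtain ⟨w, hbw, hwm1, hwm2⟩ := hw
      have hwM : w ∉ {y | ∃ x, ∀ c, ¬ IsLUB ({x, y} : Set α) c} := fun hmem =>
        hbmax w hmem hbw
      simp only [Set.mem_setOf_eq, not_exists, not_forall, not_not] at hwM
      obtain ⟨s, hs⟩ := hwM a
      rw [my_lub_iff] at hs
      have hsU : s ∈ U := ⟨hs.1.1, hbw.le.trans hs.1.2⟩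
      have hsm1 : s ≤ m1 := hs.2 m1 hm1U.1 hwm1
      have hsm2 : s ≤ m2 := hs.2 m2 hm2U.1 hwm2
      exact hne ((hm1min s hsU hsm1).symm.trans (hm2min s hsU hsm2))
    · push_neg at hw
      have hicc : Set.Icc b m1 ∩ Set.Icc b m2 = {b} := by
        ext u
        simp only [Set.mem_inter_iff, Set.mem_Icc, Set.mem_singleton_iff]
        constructor
        · rintro ⟨⟨hbu, hum1⟩, -, hum2⟩
          by_contra hub
          exact hw u (lt_of_le_of_ne hbu (Ne.symm hub)) hum1 hum2
        · rintro rfl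
          exact ⟨⟨le_rfl, hm1U.2⟩, le_rfl, hm2U.2⟩
      have hm1c : m1 ≤ c := by
        have h1 : m1 ≤ star m2 b := (hstar m2 b hm2U.2).2 m1 hicc
        exact h1.trans (hc_ub ⟨m2, hm2U, rfl⟩)
      have hmem : m1 ∈ Set.Icc b c ∩ Set.Icc b z0 :=
        ⟨⟨hm1U.2, hm1c⟩, hm1U.2, hm1z0⟩
      rw [← hz0c] at hmem
      rw [(hstar z0 b hz0.2).1] at hmem
      have hm1b : m1 = b := hmem
      exact hnoleast m1 hm1U (fun v hv => hm1b ▸ hv.2)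
  · intro h
    choose j hj using h
    refine ⟨fun x y => star (j x y) y, fun x y => ?_⟩
    have hjxy := (my_lub_iff x y (j x y)).1 (hj x y)
    have hxj : x ≤ j x y := hjxy.1.1
    have hyj : y ≤ j x y := hjxy.1.2
    constructor
    · exact ⟨j x y, ⟨hxj, hyj⟩, rfl⟩
    · rintro w ⟨z, ⟨hxz, hyz⟩, rfl⟩
      have hjz : j x y ≤ z := hjxy.2 z hxz hyz
      have hpz := hstar z y hyz
      have hpj := hstar (j x y) y hyj
      have hy_le : y ≤ star z y := by
        have hy : y ∈ Set.Icc y (star z y) ∩ Set.Icc y z := hpz.1 ▸ rfl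
        exact hy.1.2
      apply hpj.2
      apply Set.Subset.antisymm
      · rintro u ⟨⟨hyu, hu1⟩, -, hu2⟩
        exact hpz.1 ▸ (⟨⟨hyu, hu1⟩, hyu, hu2.trans hjz⟩ :
          u ∈ Set.Icc y (star z y) ∩ Set.Icc y z)
      · rintro u rfl
        exact ⟨⟨le_rfl, hy_le⟩, le_rfl, hyj⟩
end
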